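/- Under the hypotheses of a homotopy equivalence data with a small perturbation δ, the map i₁ = i + h ∘ A ∘ i is a chain map from (L, b₁) to (M, b + δ), i.e. i₁ ∘ b₁ = (b + δ) ∘ i₁. -/

import Mathlib

/-!
Write `u = 1 - δh` and `v = 1 - hδ`. The perturbation `A = u⁻¹δ` satisfies `uA = δ = Av`, and
these two equations already make `u` left- and `v` right-invertible, with inverses `1 + Ah` and
`1 + hA`. Sandwiching `X = bA + Ab + A(ip)A` between `u` and `v` gives `(b + δ)² - b² = 0`, so
`X = 0`. Expanding `i₁b₁` with `ib_L = bi` and `ip = 1 + bh + hb` shows that it differs from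
`(b + δ)i₁` by `(uA - δ)i + hXi = 0`.
-/

section Perturbation

variable {S : Type*} [Ring S] {b h δ A : S}

theorem one_add_mul_mul_one_sub_mul (hr : A * (1 - h * δ) = δ) :
    (1 + A * h) * (1 - δ * h) = 1 := by
  calc (1 + A * h) * (1 - δ * h) = 1 + (A * (1 - h * δ) - δ) * h := by noncomm_ring
    _ = 1 := by rw [hr, sub_self, zero_mul, add_zero]

theorem one_sub_mul_mul_one_add_mul (hl : (1 - δ * h) * A = δ) :
    (1 - h * δ) * (1 + h * A) = 1 := by
  calc (1 - h * δ) * (1 + h * A) = 1 + h * ((1 - δ * h) * A - δ) := by noncomm_ring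
    _ = 1 := by rw [hl, sub_self, mul_zero, add_zero]

theorem eq_zero_of_mul_mul_eq_zero {u u' v v' X : S} (hu : u' * u = 1) (hv : v * v' = 1)
    (h : u * X * v = 0) : X = 0 := by
  calc X = u' * (u * X * v) * v' := by
        rw [← mul_assoc, ← mul_assoc, hu, one_mul, mul_assoc, hv, mul_one]
    _ = 0 := by rw [h, mul_zero, zero_mul]

theorem perturbation_maurerCartan (hb : b * b = 0) (hδ : (b + δ) * (b + δ) = 0)
    (hl : (1 - δ * h) * A = δ) (hr : A * (1 - h * δ) = δ) :
    b * A + A * b + A * (1 + b * h + h * b) * A = 0 := by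
  refine eq_zero_of_mul_mul_eq_zero (one_add_mul_mul_one_sub_mul hr)
    (one_sub_mul_mul_one_add_mul hl) ?_
  calc (1 - δ * h) * (b * A + A * b + A * (1 + b * h + h * b) * A) * (1 - h * δ)
      = (1 - δ * h) * b * (A * (1 - h * δ)) + (1 - δ * h) * A * (b * (1 - h * δ))
        + (1 - δ * h) * A * (1 + b * h + h * b) * (A * (1 - h * δ)) := by noncomm_ring
    _ = (b + δ) * (b + δ) - b * b := by rw [hl, hr]; noncomm_ring
    _ = 0 := by rw [hδ, hb, sub_zero]

theorem perturbation_intertwines (hb : b * b = 0) (hδ : (b + δ) * (b + δ) = 0)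
    (hl : (1 - δ * h) * A = δ) (hr : A * (1 - h * δ) = δ) :
    b + (1 + b * h + h * b) * A + h * A * b + h * A * (1 + b * h + h * b) * A
      = (b + δ) * (1 + h * A) := by
  calc b + (1 + b * h + h * b) * A + h * A * b + h * A * (1 + b * h + h * b) * A
      = (b + δ) * (1 + h * A) + ((1 - δ * h) * A - δ)
        + h * (b * A + A * b + A * (1 + b * h + h * b) * A) := by noncomm_ring
    _ = (b + δ) * (1 + h * A) := by
      rw [hl, perturbation_maurerCartan hb hδ hl hr, sub_self, mul_zero, add_zero, add_zero]

end Perturbation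

theorem perturbed_i_is_chain_map_general {R L M : Type*} [CommRing R]
    [AddCommGroup L] [Module R L] [AddCommGroup M] [Module R M]
    (b h δ : Module.End R M) (bL : Module.End R L)
    (i : L →ₗ[R] M) (p : M →ₗ[R] L)
    (hb : b * b = 0)
    (hip : (i ∘ₗ p : Module.End R M) = 1 + b * h + h * b)
    (hi : i ∘ₗ bL = b ∘ₗ i)
    (hδ : (b + δ) * (b + δ) = 0)
    (u : (Module.End R M)ˣ) (hu : (u : Module.End R M) = 1 - δ * h)
    (A : Module.End R M) (hA : A = (↑u⁻¹ : Module.End R M) * δ)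
    (b₁ : Module.End R L) (hb₁ : b₁ = bL + p ∘ₗ A ∘ₗ i)
    (i₁ : L →ₗ[R] M) (hi₁ : i₁ = i + h ∘ₗ A ∘ₗ i) :
    i₁ ∘ₗ b₁ = (b + δ) ∘ₗ i₁ := by
  have hl : (1 - δ * h) * A = δ := by rw [hA, ← hu, u.mul_inv_cancel_left]
  have hr : A * (1 - h * δ) = δ := by
    rw [hA, mul_assoc, show δ * (1 - h * δ) = (1 - δ * h) * δ by noncomm_ring, ← hu,
      u.inv_mul_cancel_left]
  subst hi₁ hb₁
  calc (i + h ∘ₗ A ∘ₗ i) ∘ₗ (bL + p ∘ₗ A ∘ₗ i)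
      = (b + (i ∘ₗ p) * A + h * A * b + h * A * (i ∘ₗ p) * A) ∘ₗ i := by
        simp only [LinearMap.comp_add, LinearMap.add_comp, LinearMap.comp_assoc, hi,
          Module.End.mul_eq_comp]
        abel
    _ = ((b + δ) * (1 + h * A)) ∘ₗ i := by rw [hip, perturbation_intertwines hb hδ hl hr]
    _ = (b + δ) ∘ₗ (i + h ∘ₗ A ∘ₗ i) := by
        simp only [Module.End.mul_eq_comp, LinearMap.comp_add, LinearMap.add_comp,
          LinearMap.comp_assoc, Module.End.one_eq_id, LinearMap.comp_id]

/-- Main perturbation lemma: `i₁ = i + h ∘ A ∘ i` is a chain map from `(L, b₁)`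
to `(M, b + δ)`, i.e. `i₁ ∘ b₁ = (b + δ) ∘ i₁`. -/
theorem perturbed_i_is_chain_map {R L M : Type*} [CommRing R]
    [AddCommGroup L] [Module R L] [AddCommGroup M] [Module R M]
    (b h δ : Module.End R M) (bL : Module.End R L)
    (i : L →ₗ[R] M) (p : M →ₗ[R] L)
    (hbL : bL * bL = 0) (hb : b * b = 0)
    (hip : (i ∘ₗ p : Module.End R M) = 1 + b * h + h * b)
    (hi : i ∘ₗ bL = b ∘ₗ i) (hp : bL ∘ₗ p = p ∘ₗ b)
    (hδ : (b + δ) * (b + δ) = 0)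
    (u : (Module.End R M)ˣ) (hu : (u : Module.End R M) = 1 - δ * h)
    (A : Module.End R M) (hA : A = (↑u⁻¹ : Module.End R M) * δ)
    (b₁ : Module.End R L) (hb₁ : b₁ = bL + p ∘ₗ A ∘ₗ i)
    (i₁ : L →ₗ[R] M) (hi₁ : i₁ = i + h ∘ₗ A ∘ₗ i) :
    i₁ ∘ₗ b₁ = (b + δ) ∘ₗ i₁ :=
  perturbed_i_is_chain_map_general b h δ bL i p hb hip hi hδ u hu A hA b₁ hb₁ i₁ hi₁
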